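/- Assume the block setup and the nested QR setup, and suppose F_{j−1}^{(G)} has rank L. Let A𝕂_j(A,F₀) := {A x : x ∈ 𝕂_j(A,F₀)}. Let U ∈ ℂ^{n×L} have orthonormal columns spanning the column space of F_{j−1}^{(G)}, and let M ∈ ℂ^{n×jL} have orthonormal columns spanning A𝕂_j(A,F₀). Then the multiset of singular values of Uᴴ M (the cosines of the principal angles between the column space of the (j−1)-st block GMRES residual and the j-th minimum-residual constraint space A𝕂_j(A,F₀)) equals the multiset of singular values of Q_j^{(11)}; in other words, these principal angles are exactly the angles whose cosines appear in a CS decomposition of the trailing 2L×2L block of Q_j. -/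

import Mathlib

open Matrix

noncomputable section

set_option maxHeartbeats 1000000

/-- Squared Frobenius norm of a complex matrix. -/
def frobSq {a b : Type*} [Fintype a] [Fintype b] (M : Matrix a b ℂ) : ℝ :=
  ∑ r, ∑ c, Complex.normSq (M r c)

/-- The four Moore–Penrose conditions. -/
def IsMoorePenrose {a b : Type*} [Fintype a] [Fintype b]
    (M : Matrix a b ℂ) (P : Matrix b a ℂ) : Prop :=
  M * P * M = M ∧ P * M * P = P ∧ (M * P)ᴴ = M * P ∧ (P * M)ᴴ = P * M

/-- The block Krylov subspace `𝕂_i(A, F)`: the span of all columns of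
`F, A F, …, A^(i-1) F`. -/
def blockKrylov {n L : ℕ} (A : Matrix (Fin n) (Fin n) ℂ)
    (F : Matrix (Fin n) (Fin L) ℂ) (i : ℕ) : Submodule ℂ (Fin n → ℂ) :=
  Submodule.span ℂ { v | ∃ k < i, ∃ c : Fin L, v = fun r => (A ^ k * F) r c }

/-- `E_L^{[mL]}` : the first `L` columns of the `mL × mL` identity matrix
(block row indexing). -/
def EL (m L : ℕ) : Matrix (Fin m × Fin L) (Fin L) ℂ :=
  Matrix.of fun r c => if (r.1 : ℕ) = 0 ∧ r.2 = c then 1 else 0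

/-- An `L × L` matrix is upper triangular. -/
def utL {L : ℕ} (M : Matrix (Fin L) (Fin L) ℂ) : Prop :=
  ∀ a b : Fin L, (b : ℕ) < (a : ℕ) → M a b = 0

/-- A block-indexed `mL × mL` matrix is upper triangular. -/
def utBig {m L : ℕ} (M : Matrix (Fin m × Fin L) (Fin m × Fin L) ℂ) : Prop :=
  ∀ r c : Fin m × Fin L, (c.1 : ℕ) * L + (c.2 : ℕ) < (r.1 : ℕ) * L + (r.2 : ℕ) → M r c = 0

/-- Stack a block-tall matrix on top of an extra block row. -/
def vcat {m L : ℕ} {col : Type*} (T : Matrix (Fin m × Fin L) col ℂ)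
    (Bo : Matrix (Fin L) col ℂ) : Matrix (Fin (m+1) × Fin L) col ℂ :=
  Matrix.of fun r cc => if h : (r.1 : ℕ) < m then T (⟨r.1, h⟩, r.2) cc else Bo r.2 cc

/-- The block matrix `[[R, Z], [0, N]]`. -/
def twoBlock {m L : ℕ} (R : Matrix (Fin m × Fin L) (Fin m × Fin L) ℂ)
    (Z : Matrix (Fin m × Fin L) (Fin L) ℂ) (N : Matrix (Fin L) (Fin L) ℂ) :
    Matrix (Fin (m+1) × Fin L) (Fin (m+1) × Fin L) ℂ :=
  Matrix.of fun r c =>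
    if hr : (r.1 : ℕ) < m then
      if hc : (c.1 : ℕ) < m then R (⟨r.1, hr⟩, r.2) (⟨c.1, hc⟩, c.2)
      else Z (⟨r.1, hr⟩, r.2) c.2
    else
      if (c.1 : ℕ) < m then 0 else N r.2 c.2

/-- The block matrix `[[R, Z], [0, Hmid], [0, Hbot]]`. -/
def threeBlock {m L : ℕ} (R : Matrix (Fin m × Fin L) (Fin m × Fin L) ℂ)
    (Z : Matrix (Fin m × Fin L) (Fin L) ℂ) (Hmid Hbot : Matrix (Fin L) (Fin L) ℂ) :
    Matrix (Fin (m+2) × Fin L) (Fin (m+1) × Fin L) ℂ :=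
  Matrix.of fun r c =>
    if hr : (r.1 : ℕ) < m then
      if hc : (c.1 : ℕ) < m then R (⟨r.1, hr⟩, r.2) (⟨c.1, hc⟩, c.2)
      else Z (⟨r.1, hr⟩, r.2) c.2
    else
      if (c.1 : ℕ) < m then 0
      else if (r.1 : ℕ) = m then Hmid r.2 c.2 else Hbot r.2 c.2

/-- `diag(Q, I_L)` : extend a block-indexed square matrix by an identity block. -/
def extendOne {m L : ℕ} (Q : Matrix (Fin m × Fin L) (Fin m × Fin L) ℂ) :
    Matrix (Fin (m+1) × Fin L) (Fin (m+1) × Fin L) ℂ :=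
  Matrix.of fun r c =>
    if hr : (r.1 : ℕ) < m then
      if hc : (c.1 : ℕ) < m then Q (⟨r.1, hr⟩, r.2) (⟨c.1, hc⟩, c.2) else 0
    else
      if (c.1 : ℕ) < m then 0 else if r.2 = c.2 then 1 else 0

/-- `diag(I_{mL}, Q)` : an identity block, then `Q` in the bottom right corner. -/
def extendBot {m L : ℕ} (Q : Matrix (Fin L) (Fin L) ℂ) :
    Matrix (Fin (m+1) × Fin L) (Fin (m+1) × Fin L) ℂ :=
  Matrix.of fun r c =>
    if (r.1 : ℕ) < m ∨ (c.1 : ℕ) < m then (if r = c then 1 else 0)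
    else Q r.2 c.2

/-- The `(m+2)L × (m+2)L` matrix which is the identity outside of its trailing
principal `2L × 2L` block, which is `[[Q11, Q12], [Q21, Q22]]`. -/
def trailingTwo {m L : ℕ} (Q11 Q12 Q21 Q22 : Matrix (Fin L) (Fin L) ℂ) :
    Matrix (Fin (m+2) × Fin L) (Fin (m+2) × Fin L) ℂ :=
  Matrix.of fun r c =>
    if (r.1 : ℕ) < m ∨ (c.1 : ℕ) < m then (if r = c then 1 else 0)
    else if (r.1 : ℕ) = m then
      (if (c.1 : ℕ) = m then Q11 r.2 c.2 else Q12 r.2 c.2)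
    else
      (if (c.1 : ℕ) = m then Q21 r.2 c.2 else Q22 r.2 c.2)

/-- The block matrix `[R ; 0]` (one extra zero block row below `R`). -/
def stackZero {m L : ℕ} (R : Matrix (Fin m × Fin L) (Fin m × Fin L) ℂ) :
    Matrix (Fin (m+1) × Fin L) (Fin m × Fin L) ℂ :=
  Matrix.of fun r c => if h : (r.1 : ℕ) < m then R (⟨r.1, h⟩, r.2) c else 0

/-- A breakdown-free block Arnoldi decomposition of length `j = p + 1` for the block
linear system `A X = B` with initial guess `X₀` (block size `L`). -/
structure BlockArnoldi (n L p : ℕ) : Type where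
  A : Matrix (Fin n) (Fin n) ℂ
  B : Matrix (Fin n) (Fin L) ℂ
  X0 : Matrix (Fin n) (Fin L) ℂ
  W : Matrix (Fin n) (Fin (p+2) × Fin L) ℂ
  S0 : Matrix (Fin L) (Fin L) ℂ
  Hbar : Matrix (Fin (p+2) × Fin L) (Fin (p+1) × Fin L) ℂ
  hL : 1 ≤ L
  hn : (p+2) * L ≤ n
  F0_rank : (B - A * X0).rank = L
  orth : Wᴴ * W = 1
  S0_ut : utL S0
  S0_inv : IsUnit S0
  F0_eq : B - A * X0 = (W.submatrix id fun c : Fin L => ((0 : Fin (p+2)), c)) * S0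
  span : ∀ i : ℕ, i ≤ p + 2 →
    blockKrylov A (B - A * X0) i =
      Submodule.span ℂ { v | ∃ c : Fin (p+2) × Fin L, (c.1 : ℕ) < i ∧ v = fun r => W r c }
  arnoldi : A * W.submatrix id (Prod.map Fin.castSucc id) = W * Hbar
  hess : ∀ r c, (c.1 : ℕ) + 1 < (r.1 : ℕ) → Hbar r c = 0
  sub_ut : ∀ (k : Fin (p+1)) (a b : Fin L), (b : ℕ) < (a : ℕ) → Hbar (k.succ, a) (k, b) = 0
  sub_inv : ∀ k : Fin (p+1), IsUnit (Matrix.of fun a b : Fin L => Hbar (k.succ, a) (k, b))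

namespace BlockArnoldi

variable {n L p : ℕ}

/-- `H̄_{j-1}`, the leading `jL × (j-1)L` submatrix of `H̄_j`. -/
def Hprev (D : BlockArnoldi n L p) : Matrix (Fin (p+1) × Fin L) (Fin p × Fin L) ℂ :=
  D.Hbar.submatrix (Prod.map Fin.castSucc id) (Prod.map Fin.castSucc id)

/-- `H_j`, the leading `jL × jL` submatrix of `H̄_j`. -/
def Hsq (D : BlockArnoldi n L p) : Matrix (Fin (p+1) × Fin L) (Fin (p+1) × Fin L) ℂ :=
  D.Hbar.submatrix (Prod.map Fin.castSucc id) id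

/-- `W_j = [V₁ … V_j]`. -/
def Wfull (D : BlockArnoldi n L p) : Matrix (Fin n) (Fin (p+1) × Fin L) ℂ :=
  D.W.submatrix id (Prod.map Fin.castSucc id)

/-- `W_{j-1} = [V₁ … V_{j-1}]`. -/
def Wprev (D : BlockArnoldi n L p) : Matrix (Fin n) (Fin p × Fin L) ℂ :=
  D.W.submatrix id (Prod.map (fun i : Fin p => (i.castSucc.castSucc : Fin (p+2))) id)

/-- `V_j`, the `j`-th block Arnoldi vector. -/
def Vj (D : BlockArnoldi n L p) : Matrix (Fin n) (Fin L) ℂ :=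
  D.W.submatrix id fun c : Fin L => (((Fin.last p).castSucc : Fin (p+2)), c)

end BlockArnoldi

/-- `Y` is the unique minimizer of `‖Hb • Y' - T‖_F` over all `Y'`. -/
def IsUniqueFrobMin {a b c : Type*} [Fintype a] [Fintype b] [Fintype c]
    (Hb : Matrix a b ℂ) (T : Matrix a c ℂ) (Y : Matrix b c ℂ) : Prop :=
  (∀ Y', frobSq (Hb * Y - T) ≤ frobSq (Hb * Y' - T)) ∧
  ∀ Y', (∀ Y'', frobSq (Hb * Y' - T) ≤ frobSq (Hb * Y'' - T)) → Y' = Y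

/-- `Y_j^{(G)}` is the solution of the `j`-th block GMRES least-squares subproblem. -/
def IsBlockGMRESj {n L p : ℕ} (D : BlockArnoldi n L p)
    (Y : Matrix (Fin (p+1) × Fin L) (Fin L) ℂ) : Prop :=
  IsUniqueFrobMin D.Hbar (EL (p+2) L * D.S0) Y

/-- `Y_{j-1}^{(G)}` is the solution of the `(j-1)`-st block GMRES least-squares
subproblem. -/
def IsBlockGMRESprev {n L p : ℕ} (D : BlockArnoldi n L p)
    (Y : Matrix (Fin p × Fin L) (Fin L) ℂ) : Prop :=
  IsUniqueFrobMin D.Hprev (EL (p+1) L * D.S0) Y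

/-- The QR setup at step `j = p+1` : a QR factorization `Q̄_{j-1} H̄_{j-1} = [R_{j-1}; 0]`
from the previous step, the induced splitting
`diag(Q̄_{j-1}, I_L)·H̄_j = [[R,Z],[0,Ĥ_{jj}],[0,H_{j+1,j}]]`, the unitary `Q_j`
(identity outside its trailing principal `2L×2L` block) completing the
QR factorization of `H̄_j`, and the unitary `Q̂_j^{(b)}` triangularizing `Ĥ_{jj}`. -/
structure QRSetup (L p : ℕ) (Hbar : Matrix (Fin (p+2) × Fin L) (Fin (p+1) × Fin L) ℂ)
    (S0 : Matrix (Fin L) (Fin L) ℂ) : Type where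
  Qbar : Matrix (Fin (p+1) × Fin L) (Fin (p+1) × Fin L) ℂ
  R : Matrix (Fin p × Fin L) (Fin p × Fin L) ℂ
  Z : Matrix (Fin p × Fin L) (Fin L) ℂ
  Hhat : Matrix (Fin L) (Fin L) ℂ
  Hsub : Matrix (Fin L) (Fin L) ℂ
  Q11 : Matrix (Fin L) (Fin L) ℂ
  Q12 : Matrix (Fin L) (Fin L) ℂ
  Q21 : Matrix (Fin L) (Fin L) ℂ
  Q22 : Matrix (Fin L) (Fin L) ℂ
  N : Matrix (Fin L) (Fin L) ℂ
  Qhatb : Matrix (Fin L) (Fin L) ℂ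
  Nhat : Matrix (Fin L) (Fin L) ℂ
  Qbar_unit : Qbarᴴ * Qbar = 1
  Qbar_base : p = 0 → Qbar = 1
  R_ut : utBig R
  R_inv : IsUnit R
  qr_prev : Qbar * Hbar.submatrix (Prod.map Fin.castSucc id) (Prod.map Fin.castSucc id)
      = stackZero R
  qr_split : extendOne Qbar * Hbar = threeBlock R Z Hhat Hsub
  Qj_unit : (trailingTwo (m := p) Q11 Q12 Q21 Q22)ᴴ * trailingTwo (m := p) Q11 Q12 Q21 Q22 = 1
  qr_full : trailingTwo (m := p) Q11 Q12 Q21 Q22 * (extendOne Qbar * Hbar)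
      = threeBlock R Z N 0
  N_ut : utL N
  N_inv : IsUnit N
  Qhatb_unit : Qhatbᴴ * Qhatb = 1
  Nhat_def : Nhat = Qhatb * Hhat
  Nhat_ut : utL Nhat

namespace QRSetup

variable {L p : ℕ} {Hbar : Matrix (Fin (p+2) × Fin L) (Fin (p+1) × Fin L) ℂ}
  {S0 : Matrix (Fin L) (Fin L) ℂ}

/-- `C̃_j` : the last `L` rows of `Q̄_{j-1} E_L^{[jL]} S₀`. -/
def Ct (S : QRSetup L p Hbar S0) : Matrix (Fin L) (Fin L) ℂ :=
  Matrix.of fun a b => (S.Qbar * (EL (p+1) L * S0)) ((Fin.last p), a) b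

/-- `C_j := Q_j^{(11)} C̃_j`. -/
def C (S : QRSetup L p Hbar S0) : Matrix (Fin L) (Fin L) ℂ := S.Q11 * S.Ct

/-- `Ĉ_j := Q̂_j^{(b)} C̃_j`. -/
def Chat (S : QRSetup L p Hbar S0) : Matrix (Fin L) (Fin L) ℂ := S.Qhatb * S.Ct

end QRSetup

/-- Column space of a matrix: the span of its columns. -/
def colSpace {n : ℕ} {c : Type*} [Fintype c] (M : Matrix (Fin n) c ℂ) :
    Submodule ℂ (Fin n → ℂ) :=
  Submodule.span ℂ (Set.range fun j => fun r => M r j)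

/-- The multiset of singular values of `M` (square roots of the eigenvalues of
`M Mᴴ`, one value for each row index). -/
noncomputable def svalsMultiset {a b : Type*} [Fintype a] [Fintype b] [DecidableEq a]
    (M : Matrix a b ℂ) : Multiset ℝ :=
  (Finset.univ.val : Multiset a).map
    fun i => Real.sqrt ((Matrix.isHermitian_mul_conjTranspose_self M).eigenvalues i)

/-- The nested family of accumulated unitary factors:
`Q̄₀ = I` and `Q̄_i = Q_i · diag(Q̄_{i-1}, I_L)`, where `Q_i` is the identity outside
its trailing `2L × 2L` block `[[Q11 i, Q12 i], [Q21 i, Q22 i]]`. -/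
def QbarFam {L : ℕ} (Q11f Q12f Q21f Q22f : ℕ → Matrix (Fin L) (Fin L) ℂ) :
    (i : ℕ) → Matrix (Fin (i+1) × Fin L) (Fin (i+1) × Fin L) ℂ
  | 0 => 1
  | i+1 => trailingTwo (m := i) (Q11f (i+1)) (Q12f (i+1)) (Q21f (i+1)) (Q22f (i+1)) *
      extendOne (QbarFam Q11f Q12f Q21f Q22f i)

/-- The product `Qf i * Qf (i-1) * ⋯ * Qf 1`. -/
def prodFam {L : ℕ} (Qf : ℕ → Matrix (Fin L) (Fin L) ℂ) : ℕ → Matrix (Fin L) (Fin L) ℂ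
  | 0 => 1
  | i+1 => Qf (i+1) * prodFam Qf i

/-- `H̄_i`, the leading `(i+1)L × iL` submatrix of `H̄_j`. -/
def BlockArnoldi.Hlead {n L p : ℕ} (D : BlockArnoldi n L p) (i : ℕ) (h : i ≤ p + 1) :
    Matrix (Fin (i+1) × Fin L) (Fin i × Fin L) ℂ :=
  D.Hbar.submatrix (Prod.map (Fin.castLE (by omega)) id) (Prod.map (Fin.castLE (by omega)) id)

/-!
Everything is expressed in the Arnoldi basis `W`. Least squares optimality of `Y_{j-1}` means that
`Q̄_{j-1}` maps the coefficients of the residual to `[0; C̃]`, so `F_{j-1}` lies in the span of the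
`L` orthonormal columns `W [Q̄_{j-1}ᴴ [0; I]; 0]`. Likewise `A 𝕂_j(A, F₀)` is the range of
`W H̄_j = W Q̄_jᴴ [R̄_j; 0]`, spanned by the orthonormal columns `W Q̄_jᴴ [I; 0]`. Principal
angles do not depend on the orthonormal bases, and since `Q̄_j = Q_j diag(Q̄_{j-1}, I)` the
product of the two bases is `[0; Q_j^{(11)}]ᴴ`.
-/

open Polynomial in
lemma svalsMultiset_eq_of_charpoly_eq {a b c : Type*} [Fintype a] [DecidableEq a] [Fintype b]
    [Fintype c] {M : Matrix a b ℂ} {N : Matrix a c ℂ}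
    (h : (M * Mᴴ).charpoly = (N * Nᴴ).charpoly) : svalsMultiset M = svalsMultiset N := by
  have hroots := congrArg roots h
  rw [(isHermitian_mul_conjTranspose_self M).roots_charpoly_eq_eigenvalues,
    (isHermitian_mul_conjTranspose_self N).roots_charpoly_eq_eigenvalues,
    ← Multiset.map_map, ← Multiset.map_map] at hroots
  change Multiset.map (Real.sqrt ∘ _) _ = Multiset.map (Real.sqrt ∘ _) _
  rw [← Multiset.map_map, ← Multiset.map_map,
    Multiset.map_injective Complex.ofReal_injective hroots]

lemma svalsMultiset_conjTranspose_mul_mul {a b c : Type*} [Fintype a] [DecidableEq a]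
    [Fintype b] [DecidableEq b] [Fintype c] {V : Matrix a a ℂ} (hV : V * Vᴴ = 1) (X : Matrix a b ℂ)
    {V' : Matrix b c ℂ} (hV' : V' * V'ᴴ = 1) :
    svalsMultiset (Vᴴ * X * V') = svalsMultiset X := by
  refine svalsMultiset_eq_of_charpoly_eq ?_
  have : Vᴴ * X * V' * (Vᴴ * X * V')ᴴ = Vᴴ * (X * Xᴴ * V) := by
    simp only [conjTranspose_mul, conjTranspose_conjTranspose, Matrix.mul_assoc]
    rw [← Matrix.mul_assoc V', hV', Matrix.one_mul]
  rw [this, charpoly_mul_comm, Matrix.mul_assoc, hV, Matrix.mul_one]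

lemma colSpace_eq_range {n : ℕ} {c : Type*} [Fintype c] (M : Matrix (Fin n) c ℂ) :
    colSpace M = LinearMap.range M.mulVecLin := by
  rw [range_mulVecLin]
  rfl

lemma colSpace_mul {n : ℕ} {c : Type*} [Fintype c] (A : Matrix (Fin n) (Fin n) ℂ)
    (M : Matrix (Fin n) c ℂ) : colSpace (A * M) = (colSpace M).map A.mulVecLin := by
  rw [colSpace_eq_range, colSpace_eq_range, mulVecLin_mul, LinearMap.range_comp]

lemma colSpace_mul_le {n : ℕ} {c d : Type*} [Fintype c] [Fintype d]
    (M : Matrix (Fin n) c ℂ) (N : Matrix c d ℂ) : colSpace (M * N) ≤ colSpace M := by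
  rw [colSpace_eq_range, colSpace_eq_range, mulVecLin_mul]
  exact LinearMap.range_comp_le_range _ _

lemma exists_eq_mul_of_colSpace_le {n : ℕ} {c d : Type*} [Fintype c] [Fintype d]
    {P : Matrix (Fin n) c ℂ} {U : Matrix (Fin n) d ℂ} (h : colSpace U ≤ colSpace P) :
    ∃ V : Matrix c d ℂ, U = P * V := by
  have hcol (j : d) : ∃ v : c → ℂ, P *ᵥ v = fun r => U r j := by
    have := h (Submodule.subset_span ⟨j, rfl⟩)
    rwa [colSpace_eq_range] at this
  choose v hv using hcol
  refine ⟨of fun i j => v j i, ?_⟩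
  ext r j
  exact (congrFun (hv j) r).symm

lemma exists_unitary_eq_mul_of_colSpace_le {n : ℕ} {c : Type*} [Fintype c] [DecidableEq c]
    {P U : Matrix (Fin n) c ℂ} (hP : Pᴴ * P = 1) (hU : Uᴴ * U = 1)
    (h : colSpace U ≤ colSpace P) : ∃ V : Matrix c c ℂ, U = P * V ∧ V * Vᴴ = 1 := by
  obtain ⟨V, rfl⟩ := exists_eq_mul_of_colSpace_le h
  refine ⟨V, rfl, mul_eq_one_comm.mp ?_⟩
  rwa [conjTranspose_mul, Matrix.mul_assoc, ← Matrix.mul_assoc Pᴴ, hP, Matrix.one_mul] at hU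

/-- The cosines of the principal angles between two subspaces do not depend on the orthonormal
bases chosen for them. -/
lemma svalsMultiset_conjTranspose_mul_eq {n : ℕ} {a b : Type*} [Fintype a] [DecidableEq a]
    [Fintype b] [DecidableEq b] {U P : Matrix (Fin n) a ℂ} {M G : Matrix (Fin n) b ℂ}
    (hU : Uᴴ * U = 1) (hP : Pᴴ * P = 1) (hUP : colSpace U ≤ colSpace P)
    (hM : Mᴴ * M = 1) (hG : Gᴴ * G = 1) (hMG : colSpace M ≤ colSpace G) :
    svalsMultiset (Uᴴ * M) = svalsMultiset (Pᴴ * G) := by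
  obtain ⟨V, rfl, hV⟩ := exists_unitary_eq_mul_of_colSpace_le hP hU hUP
  obtain ⟨V', rfl, hV'⟩ := exists_unitary_eq_mul_of_colSpace_le hG hM hMG
  rw [conjTranspose_mul, Matrix.mul_assoc, ← Matrix.mul_assoc Pᴴ, ← Matrix.mul_assoc,
    svalsMultiset_conjTranspose_mul_mul hV _ hV']

section BlockRows

variable {m L : ℕ} {col : Type*}

@[simp]
lemma vcat_apply_castSucc (T : Matrix (Fin m × Fin L) col ℂ) (B : Matrix (Fin L) col ℂ)
    (i : Fin m) (l : Fin L) (c : col) : vcat T B (i.castSucc, l) c = T (i, l) c := by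
  simp [vcat]

@[simp]
lemma vcat_apply_last (T : Matrix (Fin m × Fin L) col ℂ) (B : Matrix (Fin L) col ℂ)
    (l : Fin L) (c : col) : vcat T B (Fin.last m, l) c = B l c := by
  simp [vcat]

lemma stackZero_eq_vcat (R : Matrix (Fin m × Fin L) (Fin m × Fin L) ℂ) :
    stackZero R = vcat R 0 := by
  ext ⟨i, l⟩ c
  cases i using Fin.lastCases <;> simp [stackZero]

lemma vcat_mul [Fintype col] {col' : Type*} (T : Matrix (Fin m × Fin L) col ℂ)
    (B : Matrix (Fin L) col ℂ) (C : Matrix col col' ℂ) :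
    vcat T B * C = vcat (T * C) (B * C) := by
  ext ⟨i, l⟩ c
  cases i using Fin.lastCases <;> simp [mul_apply]

lemma vcat_sub (T T' : Matrix (Fin m × Fin L) col ℂ) (B B' : Matrix (Fin L) col ℂ) :
    vcat T B - vcat T' B' = vcat (T - T') (B - B') := by
  ext ⟨i, l⟩ c
  cases i using Fin.lastCases <;> simp

lemma sum_blockRows {β : Type*} [AddCommMonoid β] (f : Fin (m+1) × Fin L → β) :
    ∑ r, f r = ∑ k : Fin m × Fin L, f (k.1.castSucc, k.2) + ∑ l, f (Fin.last m, l) := by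
  rw [Fintype.sum_prod_type, Fintype.sum_prod_type, Fin.sum_univ_castSucc]

lemma conjTranspose_vcat_mul_vcat {col' : Type*} (T : Matrix (Fin m × Fin L) col ℂ)
    (B : Matrix (Fin L) col ℂ) (T' : Matrix (Fin m × Fin L) col' ℂ) (B' : Matrix (Fin L) col' ℂ) :
    (vcat T B)ᴴ * vcat T' B' = Tᴴ * T' + Bᴴ * B' := by
  ext a c
  simp [mul_apply, sum_blockRows]

lemma eq_stackZero_of_lastRow_eq_zero (M : Matrix (Fin (m+1) × Fin L) (Fin m × Fin L) ℂ)
    (h : ∀ l c, M (Fin.last m, l) c = 0) :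
    M = stackZero (M.submatrix (Prod.map Fin.castSucc id) id) := by
  ext ⟨i, l⟩ c
  cases i using Fin.lastCases <;> simp [stackZero_eq_vcat, h]

@[simp]
lemma extendOne_apply_castSucc_castSucc (Q : Matrix (Fin m × Fin L) (Fin m × Fin L) ℂ)
    (i j : Fin m) (a b : Fin L) :
    extendOne Q (i.castSucc, a) (j.castSucc, b) = Q (i, a) (j, b) := by
  simp [extendOne]

@[simp]
lemma extendOne_apply_castSucc_last (Q : Matrix (Fin m × Fin L) (Fin m × Fin L) ℂ)
    (i : Fin m) (a b : Fin L) : extendOne Q (i.castSucc, a) (Fin.last m, b) = 0 := by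
  simp [extendOne]

@[simp]
lemma extendOne_apply_last_castSucc (Q : Matrix (Fin m × Fin L) (Fin m × Fin L) ℂ)
    (j : Fin m) (a b : Fin L) : extendOne Q (Fin.last m, a) (j.castSucc, b) = 0 := by
  simp [extendOne]

@[simp]
lemma extendOne_apply_last_last (Q : Matrix (Fin m × Fin L) (Fin m × Fin L) ℂ)
    (a b : Fin L) : extendOne Q (Fin.last m, a) (Fin.last m, b) = if a = b then 1 else 0 := by
  simp [extendOne]

lemma conjTranspose_extendOne (Q : Matrix (Fin m × Fin L) (Fin m × Fin L) ℂ) :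
    (extendOne Q)ᴴ = extendOne Qᴴ := by
  ext ⟨i, a⟩ ⟨j, b⟩
  cases i using Fin.lastCases <;> cases j using Fin.lastCases <;> simp [eq_comm]

lemma extendOne_mul_extendOne (Q Q' : Matrix (Fin m × Fin L) (Fin m × Fin L) ℂ) :
    extendOne Q * extendOne Q' = extendOne (Q * Q') := by
  ext ⟨i, a⟩ ⟨j, b⟩
  cases i using Fin.lastCases <;> cases j using Fin.lastCases <;>
    simp [mul_apply, sum_blockRows]

lemma extendOne_one : extendOne (1 : Matrix (Fin m × Fin L) (Fin m × Fin L) ℂ) = 1 := by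
  ext ⟨i, a⟩ ⟨j, b⟩
  cases i using Fin.lastCases <;> cases j using Fin.lastCases <;>
    simp [one_apply, (Fin.castSucc_ne_last _).symm]

lemma extendOne_mul_vcat {c : Type*} (Q : Matrix (Fin m × Fin L) (Fin m × Fin L) ℂ)
    (T : Matrix (Fin m × Fin L) c ℂ) (B : Matrix (Fin L) c ℂ) :
    extendOne Q * vcat T B = vcat (Q * T) B := by
  ext ⟨i, a⟩ c
  cases i using Fin.lastCases <;> simp [mul_apply, sum_blockRows, ite_mul]

lemma trailingTwo_mul_vcat_vcat_zero_one (Q11 Q12 Q21 Q22 : Matrix (Fin L) (Fin L) ℂ) :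
    trailingTwo (m := m) Q11 Q12 Q21 Q22 * (vcat (vcat 0 1) 0 : Matrix (Fin (m+2) × Fin L) _ ℂ) =
      vcat (vcat 0 Q11) Q21 := by
  ext ⟨i, a⟩ c
  simp only [mul_apply, sum_blockRows, vcat_apply_castSucc, vcat_apply_last]
  cases i using Fin.lastCases with
  | last => simp [trailingTwo, one_apply]
  | cast i => cases i using Fin.lastCases <;> simp [trailingTwo, one_apply]

end BlockRows

section FrobeniusLeastSquares

variable {a b : Type*} [Fintype a] [Fintype b]

lemma frobSq_eq_re_trace (M : Matrix a b ℂ) : frobSq M = (trace (Mᴴ * M)).re := by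
  simp only [frobSq, trace, diag_apply, mul_apply, conjTranspose_apply, Complex.re_sum,
    RCLike.star_def, ← Complex.normSq_eq_conj_mul_self, Complex.ofReal_re]
  exact Finset.sum_comm

lemma frobSq_unitary_mul [DecidableEq a] {Q : Matrix a a ℂ} (hQ : Qᴴ * Q = 1) (M : Matrix a b ℂ) :
    frobSq (Q * M) = frobSq M := by
  rw [frobSq_eq_re_trace, frobSq_eq_re_trace, conjTranspose_mul, Matrix.mul_assoc,
    ← Matrix.mul_assoc Qᴴ, hQ, Matrix.one_mul]

lemma frobSq_nonneg (M : Matrix a b ℂ) : 0 ≤ frobSq M :=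
  Finset.sum_nonneg fun _ _ => Finset.sum_nonneg fun _ _ => Complex.normSq_nonneg _

lemma frobSq_eq_zero_iff {M : Matrix a b ℂ} : frobSq M = 0 ↔ M = 0 := by
  have hrow (r : a) : 0 ≤ ∑ c, Complex.normSq (M r c) :=
    Finset.sum_nonneg fun _ _ => Complex.normSq_nonneg _
  simp only [frobSq, Finset.sum_eq_zero_iff_of_nonneg fun r _ => hrow r,
    Finset.sum_eq_zero_iff_of_nonneg fun _ _ => Complex.normSq_nonneg _, Finset.mem_univ,
    true_implies, Complex.normSq_eq_zero, ← Matrix.ext_iff, Matrix.zero_apply]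

lemma frobSq_neg (M : Matrix a b ℂ) : frobSq (-M) = frobSq M := by
  simp [frobSq]

lemma frobSq_vcat {m L : ℕ} (T : Matrix (Fin m × Fin L) b ℂ) (B : Matrix (Fin L) b ℂ) :
    frobSq (vcat T B) = frobSq T + frobSq B := by
  simp [frobSq, sum_blockRows]

lemma sub_mul_eq_of_forall_frobSq_le {m L : ℕ}
    {Q : Matrix (Fin (m+1) × Fin L) (Fin (m+1) × Fin L) ℂ} (hQ : Qᴴ * Q = 1)
    {H : Matrix (Fin (m+1) × Fin L) (Fin m × Fin L) ℂ}
    {R : Matrix (Fin m × Fin L) (Fin m × Fin L) ℂ} (hQR : Q * H = stackZero R) (hR : IsUnit R)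
    {T : Matrix (Fin (m+1) × Fin L) b ℂ} {Y : Matrix (Fin m × Fin L) b ℂ}
    (hY : ∀ Y' : Matrix (Fin m × Fin L) b ℂ, frobSq (H * Y - T) ≤ frobSq (H * Y' - T)) :
    T - H * Y = Qᴴ * vcat (0 : Matrix (Fin m × Fin L) b ℂ)
      ((Q * T).submatrix (fun l => (Fin.last m, l)) id) := by
  set top := (Q * T).submatrix (Prod.map Fin.castSucc id) id
  set bot := (Q * T).submatrix (fun l => (Fin.last m, l)) id
  have hQT : Q * T = vcat top bot := by
    ext ⟨i, l⟩ c
    cases i using Fin.lastCases <;> simp [top, bot]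
  have hQres (Y' : Matrix (Fin m × Fin L) b ℂ) : Q * (T - H * Y') = vcat (top - R * Y') bot := by
    rw [Matrix.mul_sub, ← Matrix.mul_assoc, hQR, hQT, stackZero_eq_vcat, vcat_mul, vcat_sub,
      Matrix.zero_mul, sub_zero]
  have hres (Y' : Matrix (Fin m × Fin L) b ℂ) :
      frobSq (H * Y' - T) = frobSq (top - R * Y') + frobSq bot := by
    rw [← frobSq_neg, neg_sub, ← frobSq_unitary_mul hQ, hQres, frobSq_vcat]
  -- `R⁻¹ top` kills the first term, so minimality of `Y` forces `R Y = top`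
  have hRY : top - R * Y = 0 := by
    have hmin := hY (hR.unit⁻¹.val * top)
    rw [hres, hres, ← Matrix.mul_assoc, IsUnit.mul_val_inv, Matrix.one_mul, sub_self,
      frobSq_eq_zero_iff.mpr rfl, add_le_add_iff_right] at hmin
    exact frobSq_eq_zero_iff.mp (le_antisymm hmin (frobSq_nonneg _))
  rw [← hRY, ← hQres, ← Matrix.mul_assoc, hQ, Matrix.one_mul]

end FrobeniusLeastSquares

lemma EL_succ (m L : ℕ) : EL (m+2) L = vcat (EL (m+1) L) (0 : Matrix (Fin L) (Fin L) ℂ) := by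
  ext ⟨i, l⟩ c
  cases i using Fin.lastCases <;> simp [EL]

lemma mul_EL {a : Type*} {m L : ℕ} (W : Matrix a (Fin (m+1) × Fin L) ℂ) :
    W * EL (m+1) L = W.submatrix id fun c => (0, c) := by
  ext r c
  simp [mul_apply, EL, Fintype.sum_prod_type, ite_and]

lemma conjTranspose_QbarFam_mul_self {L N : ℕ} {Q11f Q12f Q21f Q22f : ℕ → Matrix (Fin L) (Fin L) ℂ}
    (hQ : ∀ i < N, (trailingTwo (m := i) (Q11f (i+1)) (Q12f (i+1)) (Q21f (i+1)) (Q22f (i+1)))ᴴ *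
      trailingTwo (m := i) (Q11f (i+1)) (Q12f (i+1)) (Q21f (i+1)) (Q22f (i+1)) = 1) :
    ∀ i ≤ N, (QbarFam Q11f Q12f Q21f Q22f i)ᴴ * QbarFam Q11f Q12f Q21f Q22f i = 1
  | 0, _ => by simp [QbarFam]
  | i+1, hi => by
    rw [QbarFam, conjTranspose_mul, Matrix.mul_assoc, ← Matrix.mul_assoc (trailingTwo _ _ _ _)ᴴ,
      hQ i hi, Matrix.one_mul, conjTranspose_extendOne, extendOne_mul_extendOne,
      conjTranspose_QbarFam_mul_self hQ i (by omega), extendOne_one]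

lemma svalsMultiset_conjTranspose_vcat_zero {m L : ℕ} (Q : Matrix (Fin L) (Fin L) ℂ) :
    svalsMultiset (vcat (0 : Matrix (Fin m × Fin L) (Fin L) ℂ) Q)ᴴ = svalsMultiset Q := by
  refine svalsMultiset_eq_of_charpoly_eq ?_
  rw [conjTranspose_conjTranspose, conjTranspose_vcat_mul_vcat, charpoly_mul_comm]
  simp

namespace BlockArnoldi

variable {n L p : ℕ} (D : BlockArnoldi n L p)

lemma initialResidual_eq :
    D.B - D.A * D.X0 = D.W * vcat (EL (p+1) L * D.S0) (0 : Matrix (Fin L) (Fin L) ℂ) := by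
  rw [D.F0_eq, ← mul_EL, EL_succ, Matrix.mul_assoc, vcat_mul, Matrix.zero_mul]

lemma A_mul_Wprev :
    D.A * D.Wprev = D.W * vcat D.Hprev (0 : Matrix (Fin L) (Fin p × Fin L) ℂ) := by
  have hH : vcat D.Hprev 0 = D.Hbar.submatrix id (Prod.map Fin.castSucc id) := by
    ext ⟨i, a⟩ ⟨k, l⟩
    cases i using Fin.lastCases with
    | last => simpa using (D.hess (Fin.last (p+1), a) (k.castSucc, l) (by simp)).symm
    | cast i => simp [Hprev]
  have h := congrArg (·.submatrix id (Prod.map Fin.castSucc id)) D.arnoldi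
  ext r ⟨k, l⟩
  simpa [hH, mul_apply, Wprev] using congrFun (congrFun h r) (k, l)

lemma residual_eq (Y : Matrix (Fin p × Fin L) (Fin L) ℂ) :
    D.B - D.A * (D.X0 + D.Wprev * Y) =
      D.W * vcat (EL (p+1) L * D.S0 - D.Hprev * Y) (0 : Matrix (Fin L) (Fin L) ℂ) := by
  rw [Matrix.mul_add, sub_add_eq_sub_sub, D.initialResidual_eq, ← Matrix.mul_assoc, D.A_mul_Wprev,
    Matrix.mul_assoc, ← Matrix.mul_sub, vcat_mul, vcat_sub, Matrix.zero_mul, sub_zero]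

lemma map_blockKrylov :
    (blockKrylov D.A (D.B - D.A * D.X0) (p+1)).map D.A.mulVecLin = colSpace (D.W * D.Hbar) := by
  have hspan : blockKrylov D.A (D.B - D.A * D.X0) (p+1) = colSpace D.Wfull := by
    rw [D.span (p+1) (by omega), colSpace]
    congr 1
    ext v
    constructor
    · rintro ⟨⟨k, l⟩, hk, rfl⟩
      exact ⟨(⟨k, hk⟩, l), rfl⟩
    · rintro ⟨⟨k, l⟩, rfl⟩
      exact ⟨(k.castSucc, l), k.isLt, rfl⟩
  rw [hspan, ← colSpace_mul, ← D.arnoldi, Wfull]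

/-- Orthonormal columns spanning the `(j-1)`-st block GMRES residual, when `Q` is `Q̄_{j-1}`. -/
def residualBasis (Q : Matrix (Fin (p+1) × Fin L) (Fin (p+1) × Fin L) ℂ) :
    Matrix (Fin n) (Fin L) ℂ :=
  D.W * vcat (Qᴴ * vcat (0 : Matrix (Fin p × Fin L) (Fin L) ℂ) 1) (0 : Matrix (Fin L) (Fin L) ℂ)

/-- Orthonormal columns spanning `A 𝕂_j(A, F₀)`, when `Q` is `Q̄_j`. -/
def constraintBasis (Q : Matrix (Fin (p+2) × Fin L) (Fin (p+2) × Fin L) ℂ) :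
    Matrix (Fin n) (Fin (p+1) × Fin L) ℂ :=
  D.W * (Qᴴ * stackZero (1 : Matrix (Fin (p+1) × Fin L) (Fin (p+1) × Fin L) ℂ))

lemma conjTranspose_residualBasis_mul_self {Q : Matrix (Fin (p+1) × Fin L) (Fin (p+1) × Fin L) ℂ}
    (hQ : Q * Qᴴ = 1) : (D.residualBasis Q)ᴴ * D.residualBasis Q = 1 := by
  rw [residualBasis, conjTranspose_mul, Matrix.mul_assoc, ← Matrix.mul_assoc D.Wᴴ, D.orth,
    Matrix.one_mul, conjTranspose_vcat_mul_vcat, conjTranspose_mul, conjTranspose_conjTranspose,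
    Matrix.mul_assoc, ← Matrix.mul_assoc Q, hQ, Matrix.one_mul, conjTranspose_vcat_mul_vcat]
  simp

lemma conjTranspose_constraintBasis_mul_self
    {Q : Matrix (Fin (p+2) × Fin L) (Fin (p+2) × Fin L) ℂ} (hQ : Q * Qᴴ = 1) :
    (D.constraintBasis Q)ᴴ * D.constraintBasis Q = 1 := by
  rw [constraintBasis, conjTranspose_mul, Matrix.mul_assoc, ← Matrix.mul_assoc D.Wᴴ, D.orth,
    Matrix.one_mul, conjTranspose_mul, conjTranspose_conjTranspose, Matrix.mul_assoc,
    ← Matrix.mul_assoc Q, hQ, Matrix.one_mul, stackZero_eq_vcat, conjTranspose_vcat_mul_vcat]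
  simp

lemma colSpace_residual_le {Q : Matrix (Fin (p+1) × Fin L) (Fin (p+1) × Fin L) ℂ}
    (hQ : Qᴴ * Q = 1) {R : Matrix (Fin p × Fin L) (Fin p × Fin L) ℂ}
    (hQR : Q * D.Hprev = stackZero R) (hR : IsUnit R) {Y : Matrix (Fin p × Fin L) (Fin L) ℂ}
    (hY : IsBlockGMRESprev D Y) :
    colSpace (D.B - D.A * (D.X0 + D.Wprev * Y)) ≤ colSpace (D.residualBasis Q) := by
  rw [D.residual_eq, sub_mul_eq_of_forall_frobSq_le hQ hQR hR hY.1]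
  convert colSpace_mul_le (D.residualBasis Q) ((Q * (EL (p+1) L * D.S0)).submatrix
    (fun l => (Fin.last p, l)) id) using 2
  rw [residualBasis, Matrix.mul_assoc, vcat_mul, Matrix.mul_assoc, vcat_mul]
  simp

lemma map_blockKrylov_le {Q : Matrix (Fin (p+2) × Fin L) (Fin (p+2) × Fin L) ℂ}
    (hQ : Qᴴ * Q = 1) {R : Matrix (Fin (p+1) × Fin L) (Fin (p+1) × Fin L) ℂ}
    (hQR : Q * D.Hbar = stackZero R) :
    (blockKrylov D.A (D.B - D.A * D.X0) (p+1)).map D.A.mulVecLin ≤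
      colSpace (D.constraintBasis Q) := by
  have : D.W * D.Hbar = D.constraintBasis Q * R := by
    rw [constraintBasis, Matrix.mul_assoc, Matrix.mul_assoc, stackZero_eq_vcat, vcat_mul,
      Matrix.one_mul, Matrix.zero_mul, ← stackZero_eq_vcat, ← hQR, ← Matrix.mul_assoc Qᴴ, hQ,
      Matrix.one_mul]
  rw [D.map_blockKrylov, this]
  exact colSpace_mul_le _ _

lemma conjTranspose_residualBasis_mul_constraintBasis
    {Q : Matrix (Fin (p+1) × Fin L) (Fin (p+1) × Fin L) ℂ} (hQ : Q * Qᴴ = 1)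
    (Q11 Q12 Q21 Q22 : Matrix (Fin L) (Fin L) ℂ) :
    (D.residualBasis Q)ᴴ * D.constraintBasis (trailingTwo (m := p) Q11 Q12 Q21 Q22 * extendOne Q) =
      (vcat (0 : Matrix (Fin p × Fin L) (Fin L) ℂ) Q11)ᴴ := by
  rw [residualBasis, constraintBasis, conjTranspose_mul, Matrix.mul_assoc, ← Matrix.mul_assoc D.Wᴴ,
    D.orth, Matrix.one_mul, ← Matrix.mul_assoc, ← conjTranspose_mul, Matrix.mul_assoc,
    extendOne_mul_vcat, ← Matrix.mul_assoc Q, hQ, Matrix.one_mul,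
    trailingTwo_mul_vcat_vcat_zero_one, stackZero_eq_vcat, conjTranspose_vcat_mul_vcat]
  simp

end BlockArnoldi

theorem stmt19_general {n L p : ℕ} (D : BlockArnoldi n L p)
    (Q11f Q12f Q21f Q22f : ℕ → Matrix (Fin L) (Fin L) ℂ)
    (hQ_unit : ∀ i : Fin (p+1),
      (trailingTwo (m := (i : ℕ)) (Q11f ((i : ℕ)+1)) (Q12f ((i : ℕ)+1))
          (Q21f ((i : ℕ)+1)) (Q22f ((i : ℕ)+1)))ᴴ *
        trailingTwo (m := (i : ℕ)) (Q11f ((i : ℕ)+1)) (Q12f ((i : ℕ)+1))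
          (Q21f ((i : ℕ)+1)) (Q22f ((i : ℕ)+1)) = 1)
    (hQR_zero : ∀ i : Fin (p+1), ∀ (a : Fin L) c,
      (QbarFam Q11f Q12f Q21f Q22f ((i : ℕ)+1) *
        D.Hlead ((i : ℕ)+1) (Nat.succ_le_of_lt i.isLt)) (Fin.last ((i : ℕ)+1), a) c = 0)
    (hQR_inv : ∀ i : Fin (p+1),
      IsUnit ((QbarFam Q11f Q12f Q21f Q22f ((i : ℕ)+1) *
        D.Hlead ((i : ℕ)+1) (Nat.succ_le_of_lt i.isLt)).submatrix
          (Prod.map Fin.castSucc id) id))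
    (Yprev : Matrix (Fin p × Fin L) (Fin L) ℂ) (hYprev : IsBlockGMRESprev D Yprev)
    (U : Matrix (Fin n) (Fin L) ℂ) (hU_orth : Uᴴ * U = 1)
    (hU_span : colSpace U = colSpace (D.B - D.A * (D.X0 + D.Wprev * Yprev)))
    (M : Matrix (Fin n) (Fin (p+1) × Fin L) ℂ) (hM_orth : Mᴴ * M = 1)
    (hM_span : colSpace M =
      Submodule.map (D.A).mulVecLin (blockKrylov D.A (D.B - D.A * D.X0) (p+1))) :
    svalsMultiset (Uᴴ * M) = svalsMultiset (Q11f (p+1)) := by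
  obtain ⟨Rprev, hQRprev, hRprev⟩ : ∃ R, QbarFam Q11f Q12f Q21f Q22f p * D.Hprev = stackZero R ∧
      IsUnit R := by
    rcases p with _ | q
    · -- `H̄_0` has no columns
      exact ⟨1, Subsingleton.elim _ _, isUnit_one⟩
    · exact ⟨_, eq_stackZero_of_lastRow_eq_zero _ (hQR_zero ⟨q, by omega⟩), hQR_inv ⟨q, by omega⟩⟩
  have hQR := eq_stackZero_of_lastRow_eq_zero _ (hQR_zero (Fin.last p))
  set Qbar := QbarFam Q11f Q12f Q21f Q22f
  have hQbar := conjTranspose_QbarFam_mul_self (N := p+1) fun i hi => hQ_unit ⟨i, hi⟩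
  have hQbar_prev := hQbar p (by omega)
  have hQbar_last := hQbar (p+1) le_rfl
  calc svalsMultiset (Uᴴ * M)
      = svalsMultiset ((D.residualBasis (Qbar p))ᴴ * D.constraintBasis (Qbar (p+1))) :=
        svalsMultiset_conjTranspose_mul_eq hU_orth
          (D.conjTranspose_residualBasis_mul_self (mul_eq_one_comm.mp hQbar_prev))
          (hU_span.trans_le (D.colSpace_residual_le hQbar_prev hQRprev hRprev hYprev))
          hM_orth (D.conjTranspose_constraintBasis_mul_self (mul_eq_one_comm.mp hQbar_last))
          (hM_span.trans_le (D.map_blockKrylov_le hQbar_last hQR))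
    _ = svalsMultiset (vcat (0 : Matrix (Fin p × Fin L) (Fin L) ℂ) (Q11f (p+1)))ᴴ := by
        rw [← D.conjTranspose_residualBasis_mul_constraintBasis (mul_eq_one_comm.mp hQbar_prev)]
        rfl
    _ = svalsMultiset (Q11f (p+1)) := svalsMultiset_conjTranspose_vcat_zero _

/-- The cosines of the principal angles between the column space of
the previous block GMRES residual `F_{j-1}^(G)` and the `j`-th minimum-residual
constraint space `A 𝕂_j(A, F₀)` are the singular values of `Q_j^(11)`. -/
theorem stmt19 {n L p : ℕ} (D : BlockArnoldi n L p)
    (Q11f Q12f Q21f Q22f : ℕ → Matrix (Fin L) (Fin L) ℂ)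
    (hQ_unit : ∀ i : Fin (p+1),
      (trailingTwo (m := (i : ℕ)) (Q11f ((i : ℕ)+1)) (Q12f ((i : ℕ)+1))
          (Q21f ((i : ℕ)+1)) (Q22f ((i : ℕ)+1)))ᴴ *
        trailingTwo (m := (i : ℕ)) (Q11f ((i : ℕ)+1)) (Q12f ((i : ℕ)+1))
          (Q21f ((i : ℕ)+1)) (Q22f ((i : ℕ)+1)) = 1)
    (hQR_zero : ∀ i : Fin (p+1), ∀ (a : Fin L) c,
      (QbarFam Q11f Q12f Q21f Q22f ((i : ℕ)+1) *
        D.Hlead ((i : ℕ)+1) (Nat.succ_le_of_lt i.isLt)) (Fin.last ((i : ℕ)+1), a) c = 0)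
    (hQR_ut : ∀ i : Fin (p+1),
      utBig ((QbarFam Q11f Q12f Q21f Q22f ((i : ℕ)+1) *
        D.Hlead ((i : ℕ)+1) (Nat.succ_le_of_lt i.isLt)).submatrix
          (Prod.map Fin.castSucc id) id))
    (hQR_inv : ∀ i : Fin (p+1),
      IsUnit ((QbarFam Q11f Q12f Q21f Q22f ((i : ℕ)+1) *
        D.Hlead ((i : ℕ)+1) (Nat.succ_le_of_lt i.isLt)).submatrix
          (Prod.map Fin.castSucc id) id))
    (Yprev : Matrix (Fin p × Fin L) (Fin L) ℂ) (hYprev : IsBlockGMRESprev D Yprev)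
    (hF : (D.B - D.A * (D.X0 + D.Wprev * Yprev)).rank = L)
    (U : Matrix (Fin n) (Fin L) ℂ) (hU_orth : Uᴴ * U = 1)
    (hU_span : colSpace U = colSpace (D.B - D.A * (D.X0 + D.Wprev * Yprev)))
    (M : Matrix (Fin n) (Fin (p+1) × Fin L) ℂ) (hM_orth : Mᴴ * M = 1)
    (hM_span : colSpace M =
      Submodule.map (D.A).mulVecLin (blockKrylov D.A (D.B - D.A * D.X0) (p+1))) :
    svalsMultiset (Uᴴ * M) = svalsMultiset (Q11f (p+1)) :=
  stmt19_general D Q11f Q12f Q21f Q22f hQ_unit hQR_zero hQR_inv Yprev hYprev U hU_orth hU_span M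
    hM_orth hM_span

end
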